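/- arXiv:1506.06383 — 3 statements merged into one kernel-verified Lean document; each statement's English description precedes it below -/
import Mathlib

section
/- Let d ≥ 2 and let ω ⊆ ℝ^d be an open set with H^{d-1}_∞(ω) < ∞. Then there exists a real-valued function Ω ∈ L^1(ℝ^d) such that I_1[Ω](x) ≥ 1 for every x ∈ ω and ‖Ω‖_{L^1} ≤ C·H^{d-1}_∞(ω), where C depends only on d. -/
open MeasureTheory Real Metric Set
open scoped FourierTransform ENNReal
noncomputable section

/-- The Riesz potential normalizing constant. -/
def rieszConst (d : ℕ) (a : ℝ) : ℝ :=
  Real.Gamma (((d : ℝ) - a) / 2) / (2 ^ a * Real.pi ^ ((d : ℝ) / 2) * Real.Gamma (a / 2))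

/-- The Riesz potential `I_a[f]`. -/
def rieszPotential (d : ℕ) (a : ℝ) (f : EuclideanSpace ℝ (Fin d) → ℝ)
    (x : EuclideanSpace ℝ (Fin d)) : ℝ :=
  rieszConst d a * ∫ y, f y * ‖x - y‖ ^ (a - (d : ℝ))

/-- `(-Δ)^{1/2}`, the Fourier multiplier with symbol `|ξ|`. -/
def halfLaplacian (d : ℕ) (φ : EuclideanSpace ℝ (Fin d) → ℝ)
    (x : EuclideanSpace ℝ (Fin d)) : ℝ :=
  (𝓕⁻ (fun ξ : EuclideanSpace ℝ (Fin d) => (‖ξ‖ : ℂ) * 𝓕 (fun y => (φ y : ℂ)) ξ) x).re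

/-- Hausdorff content of order `α` via coverings by closed balls. -/
def hausdorffContent (d : ℕ) (α : ℝ) (ω : Set (EuclideanSpace ℝ (Fin d))) : ℝ≥0∞ :=
  ⨅ (c : ℕ → EuclideanSpace ℝ (Fin d)) (r : ℕ → ℝ) (_ : ∀ j, 0 < r j)
    (_ : ω ⊆ ⋃ j, Metric.closedBall (c j) (r j)), ∑' j, ENNReal.ofReal (r j ^ α)

/-- The Laplacian. -/
def laplacian (d : ℕ) (f : EuclideanSpace ℝ (Fin d) → ℝ) (x : EuclideanSpace ℝ (Fin d)) : ℝ :=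
  ∑ i : Fin d, iteratedFDeriv ℝ 2 f x ![EuclideanSpace.single i 1, EuclideanSpace.single i 1]

/-- Fractional maximal function of order `a`. -/
def fracMaximal (d : ℕ) (a : ℝ) (f : EuclideanSpace ℝ (Fin d) → ℝ)
    (x : EuclideanSpace ℝ (Fin d)) : ℝ≥0∞ :=
  ⨆ (r : ℝ) (_ : 0 < r), ENNReal.ofReal (r ^ (a - (d : ℝ))) *
    ∫⁻ y in Metric.closedBall x r, ENNReal.ofReal |f y|

/-- BMO seminorm (as an extended real). -/
def bmoNorm (d : ℕ) (g : EuclideanSpace ℝ (Fin d) → ℝ) : ℝ≥0∞ :=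
  ⨆ (x : EuclideanSpace ℝ (Fin d)) (r : ℝ) (_ : 0 < r),
    ENNReal.ofReal (⨍ y in Metric.ball x r, |g y - ⨍ z in Metric.ball x r, g z|)

/-!
Take a cover of `ω` by balls `B(c j, r j)` with `∑ r j ^ (d - 1) ≤ 2 H^{d-1}_∞(ω)` and let `ρ y` be
the smallest radius of a ball of the cover containing `y`. The function is
`Ω = K / max (ρ, dist(·, ωᶜ))`. Since `1 / ρ ≤ ∑ j, (r j)⁻¹ 𝟙_{B j}`, its integral is at most
`K |B(0, 1)| ∑ r j ^ (d - 1)`.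

For `x ∈ ω` put `u = dist(x, ωᶜ) / 2`. Either a ball of radius `R > u` meets `B(x, u)`, or the balls
covering `B(x, u) ⊆ ω` all have radius `≤ u`; in both cases some ball `B(z, R)` with `R ≥ u` lies
in `B(x, 3R)`, and `Ω ≥ K / (5R)` on it. Hence `I₁Ω(x) ≳ K R⁻¹ R^{1-d} R^d`, a constant. The cap
by `dist(·, ωᶜ)` bounds `Ω` near `x`, so the integral defining `I₁Ω(x)` converges.

A cover with positive radii gives `|ω| ≤ |B(0, 1)| (∑ r j ^ (d - 1)) ^ (d / (d - 1))`, so a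
nonempty open set has positive content and a set of finite content is not the whole space.
-/

open Filter Topology Module

section CoverRadius

variable {X ι : Type*} [PseudoMetricSpace X] {c : ι → X} {r : ι → ℝ}

def coverRadius (c : ι → X) (r : ι → ℝ) (y : X) : ℝ≥0∞ :=
  ⨅ (j) (_ : y ∈ closedBall (c j) (r j)), ENNReal.ofReal (r j)

lemma coverRadius_le_of_mem {y : X} {j : ι} (hy : y ∈ closedBall (c j) (r j)) :
    coverRadius c r y ≤ ENNReal.ofReal (r j) :=
  iInf₂_le j hy

variable (c r) in
lemma inv_coverRadius_le_tsum_indicator (y : X) :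
    (coverRadius c r y)⁻¹ ≤
      ∑' j, (closedBall (c j) (r j)).indicator (fun _ ↦ (ENNReal.ofReal (r j))⁻¹) y := by
  simp only [coverRadius, ENNReal.inv_iInf]
  refine iSup₂_le fun j hy ↦ ?_
  rw [← indicator_of_mem hy fun _ ↦ (ENNReal.ofReal (r j))⁻¹]
  exact ENNReal.le_tsum j

lemma measurable_coverRadius [MeasurableSpace X] [OpensMeasurableSpace X] [Countable ι] :
    Measurable (coverRadius c r) :=
  .iInf fun _ ↦ by
    classical
    simp only [iInf_eq_if]
    exact measurable_const.ite measurableSet_closedBall measurable_const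

lemma exists_closedBall_coverRadius_le {x : X} {u : ℝ} (hu : 0 ≤ u)
    (hcov : closedBall x u ⊆ ⋃ j, closedBall (c j) (r j)) :
    ∃ z R, u ≤ R ∧ closedBall z R ⊆ closedBall x (3 * R) ∧
      ∀ y ∈ closedBall z R, coverRadius c r y ≤ ENNReal.ofReal R := by
  by_cases hbig : ∃ j, u < r j ∧ (closedBall (c j) (r j) ∩ closedBall x u).Nonempty
  · obtain ⟨j, hj, y₀, hy₀j, hy₀x⟩ := hbig
    refine ⟨c j, r j, hj.le, fun y hy ↦ ?_, fun y hy ↦ coverRadius_le_of_mem hy⟩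
    rw [mem_closedBall] at hy hy₀j hy₀x ⊢
    calc dist y x ≤ dist y (c j) + dist y₀ (c j) + dist y₀ x := by
          simpa only [dist_comm y₀ (c j)] using dist_triangle4 y (c j) y₀ x
      _ ≤ 3 * r j := by linarith
  · refine ⟨x, u, le_rfl, closedBall_subset_closedBall (by linarith), fun y hy ↦ ?_⟩
    obtain ⟨j, hj⟩ := mem_iUnion.1 (hcov hy)
    have hrj : r j ≤ u := not_lt.1 fun h ↦ hbig ⟨j, h, y, hj, hy⟩
    exact (coverRadius_le_of_mem hj).trans (ENNReal.ofReal_le_ofReal hrj)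

def coverDensity (c : ι → X) (r : ι → ℝ) (ω : Set X) (y : X) : ℝ≥0∞ :=
  (max (coverRadius c r y) (ENNReal.ofReal (infDist y ωᶜ)))⁻¹

lemma measurable_coverDensity [MeasurableSpace X] [OpensMeasurableSpace X] [Countable ι]
    (ω : Set X) : Measurable (coverDensity c r ω) :=
  (measurable_coverRadius.max (ENNReal.measurable_ofReal.comp
    (continuous_infDist_pt _).measurable)).inv

variable (c r) in
lemma coverDensity_le_inv_coverRadius (ω : Set X) (y : X) :
    coverDensity c r ω y ≤ (coverRadius c r y)⁻¹ :=
  ENNReal.inv_le_inv.2 (le_max_left _ _)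

lemma inv_ofReal_le_coverDensity {ω : Set X} {y : X} {t : ℝ}
    (hρ : coverRadius c r y ≤ ENNReal.ofReal t) (hy : infDist y ωᶜ ≤ t) :
    (ENNReal.ofReal t)⁻¹ ≤ coverDensity c r ω y :=
  ENNReal.inv_le_inv.2 (max_le hρ (ENNReal.ofReal_le_ofReal hy))

lemma coverDensity_toReal_le_inv {ω : Set X} {y : X} {u : ℝ} (hu : 0 < u)
    (hy : u ≤ infDist y ωᶜ) : (coverDensity c r ω y).toReal ≤ u⁻¹ := by
  have : coverDensity c r ω y ≤ (ENNReal.ofReal u)⁻¹ :=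
    ENNReal.inv_le_inv.2 ((ENNReal.ofReal_le_ofReal hy).trans (le_max_right _ _))
  simpa [ENNReal.toReal_inv, hu.le] using ENNReal.toReal_mono (by simpa using hu) this

lemma IsOpen.infDist_compl_pos {ω : Set X} (hω : IsOpen ω) (hωc : ωᶜ.Nonempty) {x : X}
    (hx : x ∈ ω) : 0 < infDist x ωᶜ :=
  (hω.isClosed_compl.notMem_iff_infDist_pos hωc).1 (not_not.2 hx)

lemma exists_closedBall_inv_ofReal_le_coverDensity {ω : Set X} (hω : IsOpen ω)
    (hωc : ωᶜ.Nonempty) (hcov : ω ⊆ ⋃ j, closedBall (c j) (r j)) {x : X} (hx : x ∈ ω) :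
    ∃ z R, infDist x ωᶜ / 2 ≤ R ∧ closedBall z R ⊆ closedBall x (3 * R) ∧
      ∀ y ∈ closedBall z R, (ENNReal.ofReal (5 * R))⁻¹ ≤ coverDensity c r ω y := by
  have hδ := hω.infDist_compl_pos hωc hx
  have hsub : closedBall x (infDist x ωᶜ / 2) ⊆ ω := fun y hy ↦ not_not.1 <|
    notMem_of_dist_lt_infDist ((mem_closedBall'.1 hy).trans_lt (half_lt_self hδ))
  obtain ⟨z, R, huR, hzR, hρ⟩ :=
    exists_closedBall_coverRadius_le (half_pos hδ).le (hsub.trans hcov)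
  refine ⟨z, R, huR, hzR, fun y hy ↦ inv_ofReal_le_coverDensity
    ((hρ y hy).trans (ENNReal.ofReal_le_ofReal (by linarith))) ?_⟩
  have h₁ := infDist_le_infDist_add_dist (x := y) (y := x) (s := ωᶜ)
  have h₂ := mem_closedBall.1 (hzR hy)
  linarith

end CoverRadius

lemma mul_measureReal_le_integral {α : Type*} [MeasurableSpace α] {μ : Measure α} {g : α → ℝ}
    {s : Set α} {C : ℝ} (hg : Integrable g μ) (hg₀ : 0 ≤ g) (hs : μ s ≠ ⊤)
    (hC : ∀ᵐ y ∂μ.restrict s, C ≤ g y) :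
    C * μ.real s ≤ ∫ y, g y ∂μ :=
  calc C * μ.real s = ∫ _ in s, C ∂μ := by rw [setIntegral_const, smul_eq_mul, mul_comm]
    _ ≤ ∫ y in s, g y ∂μ := setIntegral_mono_ae_restrict (integrableOn_const hs) hg.integrableOn hC
    _ ≤ ∫ y, g y ∂μ := setIntegral_le_integral hg (.of_forall hg₀)

section Haar

variable {E ι : Type*} [NormedAddCommGroup E] [NormedSpace ℝ E] [FiniteDimensional ℝ E]
  [MeasurableSpace E] [BorelSpace E] {μ : Measure E} [μ.IsAddHaarMeasure]
  [Countable ι] {c : ι → E} {r : ι → ℝ}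

lemma inv_ofReal_mul_measure_closedBall (x : E) {R : ℝ} (hR : 0 < R) :
    (ENNReal.ofReal R)⁻¹ * μ (closedBall x R) =
      μ (ball 0 1) * ENNReal.ofReal (R ^ ((finrank ℝ E : ℝ) - 1)) := by
  rw [Measure.addHaar_closedBall μ x hR.le, Real.rpow_sub_one hR.ne', Real.rpow_natCast,
    ENNReal.ofReal_div_of_pos hR, div_eq_mul_inv]
  ring

variable (c) in
lemma lintegral_inv_coverRadius_le (hr : ∀ j, 0 < r j) :
    ∫⁻ y, (coverRadius c r y)⁻¹ ∂μ ≤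
      μ (ball 0 1) * ∑' j, ENNReal.ofReal (r j ^ ((finrank ℝ E : ℝ) - 1)) :=
  calc ∫⁻ y, (coverRadius c r y)⁻¹ ∂μ
      ≤ ∫⁻ y, ∑' j, (closedBall (c j) (r j)).indicator (fun _ ↦ (ENNReal.ofReal (r j))⁻¹) y ∂μ :=
        lintegral_mono (inv_coverRadius_le_tsum_indicator c r)
    _ = ∑' j, (ENNReal.ofReal (r j))⁻¹ * μ (closedBall (c j) (r j)) := by
        rw [lintegral_tsum fun j ↦
          (measurable_const.indicator measurableSet_closedBall).aemeasurable]
        simp only [lintegral_indicator measurableSet_closedBall, setLIntegral_const]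
    _ = _ := by
        simp only [inv_ofReal_mul_measure_closedBall _ (hr _), ENNReal.tsum_mul_left]

lemma measure_le_of_subset_iUnion_closedBall (hn : 2 ≤ finrank ℝ E) {s : Set E}
    (hr : ∀ j, 0 ≤ r j) (hs : s ⊆ ⋃ j, closedBall (c j) (r j)) :
    μ s ≤ μ (ball 0 1) * (∑' j, ENNReal.ofReal (r j ^ ((finrank ℝ E : ℝ) - 1))) ^
      ((finrank ℝ E : ℝ) / (finrank ℝ E - 1)) := by
  set n : ℝ := (finrank ℝ E : ℝ)
  have hn₁ : 0 < n - 1 := by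
    have : (2 : ℝ) ≤ n := by simp only [n]; exact_mod_cast hn
    linarith
  set p := n / (n - 1)
  have hp : 0 ≤ p - 1 := by
    rw [sub_nonneg, one_le_div hn₁]
    linarith
  set a : ι → ℝ≥0∞ := fun j ↦ ENNReal.ofReal (r j ^ (n - 1))
  set S := ∑' j, a j
  have hsplit : ∀ t : ℝ≥0∞, t ^ p = t * t ^ (p - 1) := fun t ↦ by
    have := ENNReal.rpow_add_of_nonneg (x := t) 1 (p - 1) zero_le_one hp
    rwa [add_sub_cancel, ENNReal.rpow_one] at this
  have hball : ∀ j, μ (closedBall (c j) (r j)) = μ (ball 0 1) * a j ^ p := by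
    intro j
    rw [ENNReal.ofReal_rpow_of_nonneg (Real.rpow_nonneg (hr j) _) (by linarith),
      ← Real.rpow_mul (hr j), mul_div_cancel₀ _ hn₁.ne', Real.rpow_natCast,
      Measure.addHaar_closedBall μ _ (hr j), mul_comm]
  calc μ s ≤ ∑' j, μ (closedBall (c j) (r j)) := (measure_mono hs).trans (measure_iUnion_le _)
    _ ≤ μ (ball 0 1) * ∑' j, a j * S ^ (p - 1) := by
        simp only [hball, hsplit, ENNReal.tsum_mul_left]
        gcongr with j
        exact ENNReal.le_tsum j
    _ = μ (ball 0 1) * S ^ p := by rw [ENNReal.tsum_mul_right, hsplit]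

lemma integrable_mul_norm_sub_rpow_neg {f : E → ℝ} (hf : Integrable f μ) {x : E} {s u C : ℝ}
    (hs₀ : 0 ≤ s) (hs : s < finrank ℝ E) (hu : 0 < u) (hC : ∀ y ∈ ball x u, |f y| ≤ C) :
    Integrable (fun y ↦ f y * ‖x - y‖ ^ (-s)) μ := by
  have hn : 1 ≤ finrank ℝ E := by
    have : (0 : ℝ) < finrank ℝ E := hs₀.trans_lt hs
    exact_mod_cast this
  rw [← integrable_comp_sub_left _ x]
  simp only [sub_sub_cancel]
  have hmeas : AEStronglyMeasurable (fun z ↦ f (x - z) * ‖z‖ ^ (-s)) μ :=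
    (hf.comp_sub_left x).aestronglyMeasurable.mul
      (measurable_norm.pow_const _).aestronglyMeasurable
  have hnear : IntegrableOn (fun z ↦ f (x - z) * ‖z‖ ^ (-s)) (ball 0 u) μ := by
    refine integrableOn_ball_of_norm_le_rpow (C := C) hn hs ?_ hmeas
    filter_upwards [ae_restrict_mem measurableSet_ball] with z hz
    rw [norm_mul, Real.norm_eq_abs, Real.norm_of_nonneg (by positivity)]
    refine mul_le_mul_of_nonneg_right (hC _ ?_) (by positivity)
    simpa [dist_eq_norm] using hz
  have hfar : IntegrableOn (fun z ↦ f (x - z) * ‖z‖ ^ (-s)) (ball 0 u)ᶜ μ := by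
    refine (hf.comp_sub_left x).integrableOn.mul_bdd (c := u ^ (-s))
      (measurable_norm.pow_const _).aestronglyMeasurable ?_
    filter_upwards [ae_restrict_mem measurableSet_ball.compl] with z hz
    rw [Real.norm_of_nonneg (by positivity)]
    exact Real.rpow_le_rpow_of_nonpos hu (by simpa using hz) (neg_nonpos.2 hs₀)
  simpa using hnear.union hfar

variable (c) in
lemma lintegral_coverDensity_le (hr : ∀ j, 0 < r j) (ω : Set E) :
    ∫⁻ y, coverDensity c r ω y ∂μ ≤
      μ (ball 0 1) * ∑' j, ENNReal.ofReal (r j ^ ((finrank ℝ E : ℝ) - 1)) :=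
  (lintegral_mono (coverDensity_le_inv_coverRadius c r ω)).trans (lintegral_inv_coverRadius_le c hr)

variable (c) in
lemma lintegral_coverDensity_ne_top (hr : ∀ j, 0 < r j)
    (hS : ∑' j, ENNReal.ofReal (r j ^ ((finrank ℝ E : ℝ) - 1)) ≠ ⊤) (ω : Set E) :
    ∫⁻ y, coverDensity c r ω y ∂μ ≠ ⊤ :=
  ne_top_of_le_ne_top (ENNReal.mul_ne_top measure_ball_lt_top.ne hS)
    (lintegral_coverDensity_le c hr ω)

variable (c) in
lemma integrable_coverDensity_toReal (hr : ∀ j, 0 < r j)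
    (hS : ∑' j, ENNReal.ofReal (r j ^ ((finrank ℝ E : ℝ) - 1)) ≠ ⊤) (ω : Set E) :
    Integrable (fun y ↦ (coverDensity c r ω y).toReal) μ :=
  integrable_toReal_of_lintegral_ne_top (measurable_coverDensity ω).aemeasurable
    (lintegral_coverDensity_ne_top c hr hS ω)

variable (c) in
lemma ofReal_integral_coverDensity_toReal_le (hr : ∀ j, 0 < r j)
    (hS : ∑' j, ENNReal.ofReal (r j ^ ((finrank ℝ E : ℝ) - 1)) ≠ ⊤) (ω : Set E) :
    ENNReal.ofReal (∫ y, (coverDensity c r ω y).toReal ∂μ) ≤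
      μ (ball 0 1) * ∑' j, ENNReal.ofReal (r j ^ ((finrank ℝ E : ℝ) - 1)) := by
  have hfin := lintegral_coverDensity_ne_top (μ := μ) c hr hS ω
  rw [integral_toReal (measurable_coverDensity ω).aemeasurable
    (ae_lt_top (measurable_coverDensity ω) hfin), ENNReal.ofReal_toReal hfin]
  exact lintegral_coverDensity_le c hr ω

variable {ω : Set E}

variable (c) in
lemma integrable_coverDensity_toReal_mul_rpow (hr : ∀ j, 0 < r j)
    (hS : ∑' j, ENNReal.ofReal (r j ^ ((finrank ℝ E : ℝ) - 1)) ≠ ⊤) (hn : 1 ≤ finrank ℝ E)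
    (hω : IsOpen ω) (hωc : ωᶜ.Nonempty) {x : E} (hx : x ∈ ω) :
    Integrable (fun y ↦ (coverDensity c r ω y).toReal * ‖x - y‖ ^ (1 - (finrank ℝ E : ℝ))) μ := by
  have hδ := hω.infDist_compl_pos hωc hx
  have hn' : (1 : ℝ) ≤ finrank ℝ E := by exact_mod_cast hn
  have := integrable_mul_norm_sub_rpow_neg (integrable_coverDensity_toReal (μ := μ) c hr hS ω)
    (x := x) (s := finrank ℝ E - 1) (C := (infDist x ωᶜ / 2)⁻¹) (by linarith) (by linarith)
    (half_pos hδ) fun y hy ↦ ?_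
  · rwa [neg_sub] at this
  rw [abs_of_nonneg ENNReal.toReal_nonneg]
  refine coverDensity_toReal_le_inv (half_pos hδ) ?_
  have := infDist_le_infDist_add_dist (x := x) (y := y) (s := ωᶜ)
  rw [mem_ball, dist_comm] at hy
  linarith

lemma le_integral_coverDensity_toReal_mul_rpow (hr : ∀ j, 0 < r j)
    (hS : ∑' j, ENNReal.ofReal (r j ^ ((finrank ℝ E : ℝ) - 1)) ≠ ⊤) (hn : 1 ≤ finrank ℝ E)
    (hω : IsOpen ω) (hωc : ωᶜ.Nonempty) (hcov : ω ⊆ ⋃ j, closedBall (c j) (r j))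
    {x : E} (hx : x ∈ ω) :
    μ.real (ball 0 1) / (5 * 3 ^ (finrank ℝ E - 1)) ≤
      ∫ y, (coverDensity c r ω y).toReal * ‖x - y‖ ^ (1 - (finrank ℝ E : ℝ)) ∂μ := by
  obtain ⟨z, R, hδR, hzR, hF⟩ := exists_closedBall_inv_ofReal_le_coverDensity hω hωc hcov hx
  have hR : 0 < R := (half_pos (hω.infDist_compl_pos hωc hx)).trans_le hδR
  have : Nontrivial E := Module.nontrivial_of_finrank_pos (R := ℝ) hn
  have hae : ∀ᵐ y ∂μ.restrict (closedBall z R), (5 * R)⁻¹ * (3 * R) ^ (1 - (finrank ℝ E : ℝ)) ≤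
      (coverDensity c r ω y).toReal * ‖x - y‖ ^ (1 - (finrank ℝ E : ℝ)) := by
    -- `coverDensity` may be `⊤` (so its `toReal` is `0`) on a null set outside `ω`
    filter_upwards [ae_restrict_mem measurableSet_closedBall,
      ae_restrict_of_ae (ae_lt_top (measurable_coverDensity ω)
        (lintegral_coverDensity_ne_top (μ := μ) c hr hS ω)),
      ae_restrict_of_ae (measure_eq_zero_iff_ae_notMem.1 (measure_singleton (μ := μ) x))]
      with y hy hFy hyx
    have hxy : 0 < ‖x - y‖ := norm_pos_iff.2 (sub_ne_zero.2 (Ne.symm hyx))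
    refine mul_le_mul ?_ ?_ (by positivity) ENNReal.toReal_nonneg
    · simpa [ENNReal.toReal_inv, hR.le] using ENNReal.toReal_mono hFy.ne (hF y hy)
    · refine Real.rpow_le_rpow_of_nonpos hxy ?_ (by simp [hn])
      simpa [dist_eq_norm, norm_sub_rev] using hzR hy
  calc μ.real (ball 0 1) / (5 * 3 ^ (finrank ℝ E - 1))
      = (5 * R)⁻¹ * (3 * R) ^ (1 - (finrank ℝ E : ℝ)) * μ.real (closedBall z R) := by
        obtain ⟨m, hm⟩ := Nat.exists_eq_add_of_le' hn
        rw [Measure.addHaar_real_closedBall μ z hR.le, hm,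
          show (1 : ℝ) - ((m + 1 : ℕ) : ℝ) = -(m : ℝ) by push_cast; ring,
          Real.rpow_neg (by positivity), Real.rpow_natCast, Nat.add_sub_cancel, mul_pow, pow_succ]
        field_simp
    _ ≤ _ := mul_measureReal_le_integral
        (integrable_coverDensity_toReal_mul_rpow c hr hS hn hω hωc hx)
        (fun y ↦ by positivity) measure_closedBall_lt_top.ne hae

end Haar

lemma rieszConst_pos {d : ℕ} {a : ℝ} (ha : 0 < a) (had : a < d) : 0 < rieszConst d a :=
  div_pos (Real.Gamma_pos_of_pos (by linarith))
    (by have := Real.Gamma_pos_of_pos (half_pos ha); positivity)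

lemma measureReal_ball_pos {X : Type*} [PseudoMetricSpace X] [ProperSpace X] [MeasurableSpace X]
    {μ : Measure X} [μ.IsOpenPosMeasure] [IsFiniteMeasureOnCompacts μ] (x : X) {r : ℝ}
    (hr : 0 < r) : 0 < μ.real (ball x r) :=
  ENNReal.toReal_pos (measure_ball_pos μ x hr).ne' measure_ball_lt_top.ne

section Euclidean

variable {d : ℕ} {ω : Set (EuclideanSpace ℝ (Fin d))}

lemma exists_cover_of_hausdorffContent_lt {α : ℝ} {t : ℝ≥0∞} (h : hausdorffContent d α ω < t) :
    ∃ (c : ℕ → EuclideanSpace ℝ (Fin d)) (r : ℕ → ℝ), (∀ j, 0 < r j) ∧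
      ω ⊆ ⋃ j, closedBall (c j) (r j) ∧ ∑' j, ENNReal.ofReal (r j ^ α) < t := by
  simpa only [hausdorffContent, iInf_lt_iff, exists_prop] using h

lemma volume_le_of_hausdorffContent_lt (hd : 2 ≤ d) {t : ℝ≥0∞}
    (h : hausdorffContent d ((d : ℝ) - 1) ω < t) :
    volume ω ≤ volume (ball (0 : EuclideanSpace ℝ (Fin d)) 1) * t ^ ((d : ℝ) / (d - 1)) := by
  obtain ⟨c, r, hr, hcov, hlt⟩ := exists_cover_of_hausdorffContent_lt h
  have hfr : finrank ℝ (EuclideanSpace ℝ (Fin d)) = d := finrank_euclideanSpace_fin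
  have := measure_le_of_subset_iUnion_closedBall (μ := volume) (hfr.symm ▸ hd)
    (fun j ↦ (hr j).le) hcov
  rw [hfr] at this
  refine this.trans (mul_le_mul_right (ENNReal.rpow_le_rpow hlt.le ?_) _)
  have : (2 : ℝ) ≤ d := by exact_mod_cast hd
  exact div_nonneg (by linarith) (by linarith)

lemma hausdorffContent_pos (hd : 2 ≤ d) (hω : IsOpen ω) (hne : ω.Nonempty) :
    0 < hausdorffContent d ((d : ℝ) - 1) ω := by
  refine pos_iff_ne_zero.2 fun h₀ ↦ (hω.measure_pos volume hne).ne' ?_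
  have hp : 0 < (d : ℝ) / (d - 1) := by
    have : (2 : ℝ) ≤ d := by exact_mod_cast hd
    exact div_pos (by linarith) (by linarith)
  have hlim : Tendsto (fun t : ℝ≥0∞ ↦ volume (ball (0 : EuclideanSpace ℝ (Fin d)) 1) *
      t ^ ((d : ℝ) / (d - 1))) (𝓝[>] 0) (𝓝 0) := by
    have := ENNReal.Tendsto.const_mul
      (((ENNReal.continuous_rpow_const (y := (d : ℝ) / (d - 1))).tendsto 0).mono_left
        (nhdsWithin_le_nhds (s := Ioi 0))) (Or.inr (measure_ball_lt_top (μ := volume)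
          (x := (0 : EuclideanSpace ℝ (Fin d))) (r := 1)).ne)
    rwa [ENNReal.zero_rpow_of_pos hp, mul_zero] at this
  exact le_antisymm (ge_of_tendsto hlim (eventually_nhdsWithin_of_forall fun t ht ↦
    volume_le_of_hausdorffContent_lt hd (h₀ ▸ ht))) zero_le

lemma nonempty_compl_of_hausdorffContent_lt_top (hd : 2 ≤ d)
    (h : hausdorffContent d ((d : ℝ) - 1) ω < ⊤) : ωᶜ.Nonempty := by
  rw [nonempty_compl]
  rintro rfl
  obtain ⟨t, ht, ht_top⟩ := exists_between h
  have : Nontrivial (EuclideanSpace ℝ (Fin d)) :=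
    Module.nontrivial_of_finrank_pos (R := ℝ) (by rw [finrank_euclideanSpace_fin]; omega)
  have hp : 0 ≤ (d : ℝ) / (d - 1) := by
    have : (2 : ℝ) ≤ d := by exact_mod_cast hd
    exact div_nonneg (by linarith) (by linarith)
  have := (volume_le_of_hausdorffContent_lt hd ht).trans_lt
    (ENNReal.mul_lt_top measure_ball_lt_top (ENNReal.rpow_lt_top_of_nonneg hp ht_top.ne))
  simp [measure_univ_of_isAddLeftInvariant] at this

-- Chosen so that the lower bound of `le_integral_coverDensity_toReal_mul_rpow` becomes `1`.
def potentialScale (d : ℕ) : ℝ :=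
  5 * 3 ^ (d - 1) / (rieszConst d 1 * volume.real (ball (0 : EuclideanSpace ℝ (Fin d)) 1))

lemma potentialScale_pos (hd : 1 < d) : 0 < potentialScale d := by
  have hA := rieszConst_pos one_pos (by exact_mod_cast hd : (1 : ℝ) < d)
  have hV := measureReal_ball_pos (μ := volume) (0 : EuclideanSpace ℝ (Fin d)) one_pos
  unfold potentialScale
  positivity

variable {c : ℕ → EuclideanSpace ℝ (Fin d)} {r : ℕ → ℝ}

lemma one_le_rieszPotential_coverDensity (hd : 1 < d) (hr : ∀ j, 0 < r j)
    (hS : ∑' j, ENNReal.ofReal (r j ^ ((d : ℝ) - 1)) ≠ ⊤) (hω : IsOpen ω) (hωc : ωᶜ.Nonempty)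
    (hcov : ω ⊆ ⋃ j, closedBall (c j) (r j)) {x : EuclideanSpace ℝ (Fin d)} (hx : x ∈ ω) :
    1 ≤ rieszPotential d 1 (fun y ↦ potentialScale d * (coverDensity c r ω y).toReal) x := by
  have hfr : finrank ℝ (EuclideanSpace ℝ (Fin d)) = d := finrank_euclideanSpace_fin
  have key := le_integral_coverDensity_toReal_mul_rpow (μ := volume) hr (by rwa [hfr])
    (by omega) hω hωc hcov hx
  rw [hfr] at key
  have hA := rieszConst_pos one_pos (by exact_mod_cast hd : (1 : ℝ) < d)
  have hV := measureReal_ball_pos (μ := volume) (0 : EuclideanSpace ℝ (Fin d)) one_pos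
  simp only [rieszPotential, mul_assoc, integral_const_mul]
  calc 1 = rieszConst d 1 * (potentialScale d *
        (volume.real (ball (0 : EuclideanSpace ℝ (Fin d)) 1) / (5 * 3 ^ (d - 1)))) := by
        rw [potentialScale]; field_simp
    _ ≤ _ := by
        have := potentialScale_pos hd
        gcongr

variable (c) in
lemma ofReal_integral_abs_potentialScale_mul_le (hd : 1 < d) (hr : ∀ j, 0 < r j)
    (hS : ∑' j, ENNReal.ofReal (r j ^ ((d : ℝ) - 1)) ≠ ⊤) (ω : Set (EuclideanSpace ℝ (Fin d))) :
    ENNReal.ofReal (∫ y, |potentialScale d * (coverDensity c r ω y).toReal|) ≤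
      ENNReal.ofReal (potentialScale d) * volume (ball (0 : EuclideanSpace ℝ (Fin d)) 1) *
        ∑' j, ENNReal.ofReal (r j ^ ((d : ℝ) - 1)) := by
  have hfr : finrank ℝ (EuclideanSpace ℝ (Fin d)) = d := finrank_euclideanSpace_fin
  have h := ofReal_integral_coverDensity_toReal_le (μ := volume) c hr (by rwa [hfr]) ω
  rw [hfr] at h
  have hK := potentialScale_pos hd
  simp only [abs_mul, abs_of_pos hK, abs_of_nonneg ENNReal.toReal_nonneg, integral_const_mul,
    ENNReal.ofReal_mul hK.le, mul_assoc]
  gcongr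

end Euclidean

/-- for an open set `ω` of finite content, there is `Ω ∈ L^1` with
`I_1[Ω] ≥ 1` on `ω` and `‖Ω‖_{L^1} ≲ H^{d-1}_∞(ω)`. -/
theorem dorronsoro_for_sets (d : ℕ) (hd : 2 ≤ d) :
    ∃ C : ℝ≥0∞, 0 < C ∧ C < ⊤ ∧ ∀ ω : Set (EuclideanSpace ℝ (Fin d)), IsOpen ω →
      hausdorffContent d ((d : ℝ) - 1) ω < ⊤ →
      ∃ Ω : EuclideanSpace ℝ (Fin d) → ℝ, Integrable Ω volume ∧
        (∀ x ∈ ω, 1 ≤ rieszPotential d 1 Ω x) ∧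
        ENNReal.ofReal (∫ x, |Ω x|) ≤ C * hausdorffContent d ((d : ℝ) - 1) ω := by
  set V := volume (ball (0 : EuclideanSpace ℝ (Fin d)) 1)
  have hK := potentialScale_pos (d := d) (by omega)
  refine ⟨2 * ENNReal.ofReal (potentialScale d) * V, ?_, ?_, fun ω hω hfin ↦ ?_⟩
  · exact ENNReal.mul_pos (by simpa using hK) (measure_ball_pos _ _ one_pos).ne'
  · exact ENNReal.mul_lt_top (ENNReal.mul_lt_top (by norm_num) ENNReal.ofReal_lt_top)
      measure_ball_lt_top
  rcases ω.eq_empty_or_nonempty with rfl | hne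
  · exact ⟨0, integrable_zero _ _ _, by simp, by simp⟩
  obtain ⟨c, r, hr, hcov, hS⟩ := exists_cover_of_hausdorffContent_lt <|
    (ENNReal.lt_add_right hfin.ne (hausdorffContent_pos hd hω hne).ne').trans_eq (two_mul _).symm
  have hS_top := (hS.trans (ENNReal.mul_lt_top (by norm_num) hfin)).ne
  have hωc := nonempty_compl_of_hausdorffContent_lt_top hd hfin
  refine ⟨fun y ↦ potentialScale d * (coverDensity c r ω y).toReal,
    (integrable_coverDensity_toReal (μ := volume) c hr
      (by rwa [finrank_euclideanSpace_fin]) ω).const_mul _,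
    fun x hx ↦ one_le_rieszPotential_coverDensity (by omega) hr hS_top hω hωc hcov hx, ?_⟩
  calc _ ≤ ENNReal.ofReal (potentialScale d) * V * ∑' j, ENNReal.ofReal (r j ^ ((d : ℝ) - 1)) :=
        ofReal_integral_abs_potentialScale_mul_le c (by omega) hr hS_top ω
    _ ≤ ENNReal.ofReal (potentialScale d) * V * (2 * hausdorffContent d ((d : ℝ) - 1) ω) := by
        gcongr
    _ = _ := by ring
end
end

section
/- Dorronsoro's theorem (L^1 version): for every real-valued f ∈ C_0^∞(ℝ^d), d ≥ 2, there exists a real-valued F ∈ L^1(ℝ^d) with I_1[F](x) ≥ f(x) for all x and ‖F‖_{L^1} ≤ C‖∇f‖_{L^1}, with C depending only on d. -/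
open MeasureTheory Real Metric Set
open scoped FourierTransform ENNReal
noncomputable section

namespace DorronsoroAux

variable {d : ℕ}

/-- Fundamental theorem of calculus along a ray. -/
lemma ray_bound (f : EuclideanSpace ℝ (Fin d) → ℝ) (hf : ContDiff ℝ (⊤ : ℕ∞) f)
    (hsupp : HasCompactSupport f) (x ω : EuclideanSpace ℝ (Fin d)) (hω : ‖ω‖ = 1) :
    f x ≤ ∫ t in Ioi (0:ℝ), ‖fderiv ℝ f (x + t • ω)‖ := by
  obtain ⟨R₀, hR₀⟩ := hsupp.isBounded.subset_closedBall 0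
  set R := max R₀ 0 with hRdef
  have hR : tsupport f ⊆ closedBall 0 R :=
    hR₀.trans (closedBall_subset_closedBall (le_max_left _ _))
  have hRnn : 0 ≤ R := le_max_right _ _
  set φ : ℝ → ℝ := fun t => f (x + t • ω) with hφdef
  set φ' : ℝ → ℝ := fun t => fderiv ℝ f (x + t • ω) ω with hφ'def
  have hline : ∀ t : ℝ, HasDerivAt (fun s : ℝ => x + s • ω) ω t := by
    intro t
    simpa using ((hasDerivAt_id t).smul_const ω).const_add x
  have hder : ∀ t : ℝ, HasDerivAt φ (φ' t) t := fun t =>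
    ((hf.differentiable (by simp) (x + t • ω)).hasFDerivAt).comp_hasDerivAt t (hline t)
  have hcfd : Continuous (fderiv ℝ f) := hf.continuous_fderiv (by simp)
  have hlinec : Continuous (fun t : ℝ => x + t • ω) := by continuity
  have hnormc : Continuous (fun t : ℝ => ‖fderiv ℝ f (x + t • ω)‖) :=
    ((hcfd.comp hlinec).norm)
  -- vanishing outside a compact interval
  have hbig : ∀ t : ℝ, R + ‖x‖ < |t| → x + t • ω ∉ tsupport f := by
    intro t ht hmem
    have h1 : ‖x + t • ω‖ ≤ R := by
      have := hR hmem; simpa [Metric.mem_closedBall, dist_eq_norm] using this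
    have h2 : |t| ≤ ‖x + t • ω‖ + ‖x‖ := by
      have : ‖(x + t • ω) - x‖ ≤ ‖x + t • ω‖ + ‖x‖ := norm_sub_le _ _
      simpa [norm_smul, hω, abs_mul] using this
    linarith
  have hfz : ∀ t : ℝ, R + ‖x‖ < |t| → fderiv ℝ f (x + t • ω) = 0 := by
    intro t ht
    exact image_eq_zero_of_notMem_tsupport fun hmem =>
      hbig t ht (tsupport_fderiv_subset ℝ hmem)
  have hK : IsCompact (Icc (-(R + ‖x‖ + 1)) (R + ‖x‖ + 1)) := isCompact_Icc
  have hout : ∀ t : ℝ, t ∉ Icc (-(R + ‖x‖ + 1)) (R + ‖x‖ + 1) → R + ‖x‖ < |t| := by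
    intro t ht
    by_contra h
    push_neg at h
    have := abs_le.1 (le_trans h (by linarith : R + ‖x‖ ≤ R + ‖x‖ + 1))
    exact ht ⟨this.1, this.2⟩
  have hintφ' : Integrable φ' volume := by
    apply Continuous.integrable_of_hasCompactSupport
    · exact (hcfd.comp hlinec).clm_apply continuous_const
    · apply HasCompactSupport.intro hK
      intro t ht
      simp [hφ'def, hfz t (hout t ht)]
  have hintn : Integrable (fun t : ℝ => ‖fderiv ℝ f (x + t • ω)‖) volume := by
    apply Continuous.integrable_of_hasCompactSupport hnormc
    apply HasCompactSupport.intro hK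
    intro t ht
    simp [hfz t (hout t ht)]
  have htend : Filter.Tendsto φ Filter.atTop (nhds 0) := by
    apply Filter.Tendsto.congr' _ tendsto_const_nhds
    filter_upwards [Filter.eventually_gt_atTop (R + ‖x‖)] with t ht
    have : f (x + t • ω) = 0 := by
      apply image_eq_zero_of_notMem_tsupport
      refine hbig t ?_
      have ht0 : (0:ℝ) < t := lt_of_le_of_lt (by positivity) ht
      rwa [abs_of_pos ht0]
    simp [hφdef, this]
  have key : ∫ t in Ioi (0:ℝ), φ' t = 0 - φ 0 :=
    integral_Ioi_of_hasDerivAt_of_tendsto (hder 0).continuousAt.continuousWithinAt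
      (fun t _ => hder t) hintφ'.integrableOn htend
  have hφ0 : φ 0 = f x := by simp [hφdef]
  have hbound : ∀ t : ℝ, -φ' t ≤ ‖fderiv ℝ f (x + t • ω)‖ := by
    intro t
    have h1 : |φ' t| ≤ ‖fderiv ℝ f (x + t • ω)‖ := by
      have := (fderiv ℝ f (x + t • ω)).le_opNorm ω
      simpa [hω] using this
    exact (neg_le_abs _).trans h1
  calc f x = ∫ t in Ioi (0:ℝ), -φ' t := by
        rw [integral_neg, key, hφ0]; ring
    _ ≤ ∫ t in Ioi (0:ℝ), ‖fderiv ℝ f (x + t • ω)‖ :=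
        setIntegral_mono hintφ'.neg.integrableOn hintn.integrableOn fun t => hbound t

/-- Polar-coordinates lower bound for the Riesz-type integral. -/
lemma polar_lower (hd : 2 ≤ d) (g : EuclideanSpace ℝ (Fin d) → ℝ)
    (hgc : Continuous g) (hgs : HasCompactSupport g) (hg0 : ∀ y, 0 ≤ g y)
    (x : EuclideanSpace ℝ (Fin d)) (c : ℝ)
    (hc : ∀ ω : EuclideanSpace ℝ (Fin d), ‖ω‖ = 1 →
      c ≤ ∫ r in Ioi (0:ℝ), g (x + r • ω)) :
    Integrable (fun y => g y * ‖x - y‖ ^ ((1:ℝ) - d)) volume ∧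
    ((volume : Measure (EuclideanSpace ℝ (Fin d))).toSphere univ).toReal * c ≤
      ∫ y, g y * ‖x - y‖ ^ ((1:ℝ) - d) := by
  classical
  haveI : Nontrivial (EuclideanSpace ℝ (Fin d)) := by
    refine Module.nontrivial_of_finrank_pos (R := ℝ) (M := EuclideanSpace ℝ (Fin d)) ?_
    rw [finrank_euclideanSpace_fin]; omega
  set μ : Measure (EuclideanSpace ℝ (Fin d)) := volume with hμ
  set σ : Measure (sphere (0 : EuclideanSpace ℝ (Fin d)) 1) := μ.toSphere with hσ
  have hnd : Module.finrank ℝ (EuclideanSpace ℝ (Fin d)) = d := finrank_euclideanSpace_fin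
  set ν : Measure (Ioi (0:ℝ)) := Measure.volumeIoiPow (d - 1) with hν
  set h : EuclideanSpace ℝ (Fin d) → ℝ := fun z => g (x + z) * ‖z‖ ^ ((1:ℝ) - d) with hh
  set H : sphere (0 : EuclideanSpace ℝ (Fin d)) 1 × Ioi (0:ℝ) → ℝ :=
    fun p => g (x + (p.2 : ℝ) • (p.1 : EuclideanSpace ℝ (Fin d))) * (p.2 : ℝ) ^ ((1:ℝ) - d)
    with hH
  -- continuity of H
  have hHc : Continuous H := by
    apply Continuous.mul
    · exact hgc.comp (continuous_const.add
        ((continuous_subtype_val.comp continuous_snd).smul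
          (continuous_subtype_val.comp continuous_fst)))
    · exact (continuous_subtype_val.comp continuous_snd).rpow_const
        fun p => Or.inl (ne_of_gt p.2.2)
  -- bounds for g
  obtain ⟨y₀, hy₀⟩ := hgc.exists_forall_ge_of_hasCompactSupport hgs
  set M : ℝ := g y₀ with hM
  have hM0 : 0 ≤ M := hg0 y₀
  obtain ⟨R₀, hR₀⟩ := hgs.isBounded.subset_closedBall 0
  set R : ℝ := R₀ + ‖x‖ with hRdef
  -- dominating function
  set ψ : Ioi (0:ℝ) → ℝ := fun r => if (r:ℝ) ≤ R then (r:ℝ) ^ ((1:ℝ) - d) else 0 with hψdef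
  have hψm : Measurable ψ := by
    have hcont : Continuous (fun r : Ioi (0:ℝ) => (r:ℝ) ^ ((1:ℝ) - d)) :=
      continuous_subtype_val.rpow_const fun r => Or.inl (ne_of_gt r.2)
    refine Measurable.ite ?_ hcont.measurable measurable_const
    exact measurable_subtype_coe measurableSet_Iic
  have hψint : Integrable ψ ν := by
    refine ⟨hψm.aestronglyMeasurable, ?_⟩
    rw [hasFiniteIntegral_def, hν, Measure.volumeIoiPow]
    rw [lintegral_withDensity_eq_lintegral_mul _
      (by exact (measurable_subtype_coe.pow_const _).ennreal_ofReal)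
      (by exact hψm.nnnorm.coe_nnreal_ennreal)]
    have heq : (fun r : Ioi (0:ℝ) => ((fun r' : Ioi (0:ℝ) =>
        ENNReal.ofReal ((r':ℝ) ^ (d - 1))) * fun r' : Ioi (0:ℝ) => ‖ψ r'‖ₑ) r) =
        (fun r : Ioi (0:ℝ) => ENNReal.ofReal ((r:ℝ) ^ (d - 1)) *
          ENNReal.ofReal |if (r:ℝ) ≤ R then (r:ℝ) ^ ((1:ℝ) - d) else 0|) := by
      funext r
      simp only [hψdef, Real.enorm_eq_ofReal_abs, Pi.mul_apply]
    rw [heq]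
    rw [lintegral_subtype_comap (μ := (volume : Measure ℝ)) measurableSet_Ioi
      (fun t : ℝ => ENNReal.ofReal (t ^ (d - 1)) *
        ENNReal.ofReal |if t ≤ R then t ^ ((1:ℝ) - d) else 0|)]
    have hle : ∫⁻ r in Ioi (0:ℝ), (ENNReal.ofReal (r ^ (d - 1)) *
        ENNReal.ofReal |if r ≤ R then r ^ ((1:ℝ) - d) else 0|) ≤
        ∫⁻ r in Ioi (0:ℝ), (Ioc (0:ℝ) R).indicator (fun _ => 1) r := by
      apply setLIntegral_mono' measurableSet_Ioi
      intro r hr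
      by_cases hrR : r ≤ R
      · have hr0 : (0:ℝ) < r := hr
        have h1 : r ^ (d - 1) * |r ^ ((1:ℝ) - d)| = 1 := by
          rw [abs_of_nonneg (Real.rpow_nonneg hr0.le _), ← Real.rpow_natCast r (d - 1),
            ← Real.rpow_add hr0]
          have he : ((d - 1 : ℕ) : ℝ) + ((1:ℝ) - d) = 0 := by
            rw [Nat.cast_sub (by omega : 1 ≤ d)]
            push_cast; ring
          rw [he, Real.rpow_zero]
        rw [if_pos hrR, ← ENNReal.ofReal_mul (by positivity), h1,
          indicator_of_mem (mem_Ioc.mpr ⟨hr0, hrR⟩)]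
        simp
      · rw [if_neg hrR]
        simp
    refine lt_of_le_of_lt hle ?_
    rw [lintegral_indicator measurableSet_Ioc]
    simp only [lintegral_one, Measure.restrict_restrict measurableSet_Ioc,
      Measure.restrict_apply MeasurableSet.univ, univ_inter]
    exact lt_of_le_of_lt (measure_mono inter_subset_left) measure_Ioc_lt_top
  -- pointwise bound
  have hbound : ∀ p : sphere (0 : EuclideanSpace ℝ (Fin d)) 1 × Ioi (0:ℝ),
      ‖H p‖ ≤ ‖M * ψ p.2‖ := by
    rintro ⟨ω, r⟩
    have hr0 : (0:ℝ) < r := r.2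
    have hω1 : ‖(ω : EuclideanSpace ℝ (Fin d))‖ = 1 := mem_sphere_zero_iff_norm.1 ω.2
    by_cases hrR : (r:ℝ) ≤ R
    · have h1 : ‖H (ω, r)‖ = g (x + (r:ℝ) • (ω : EuclideanSpace ℝ (Fin d))) *
          (r:ℝ) ^ ((1:ℝ) - d) := by
        rw [Real.norm_eq_abs, abs_of_nonneg (mul_nonneg (hg0 _) (Real.rpow_nonneg hr0.le _))]
      have h2 : ‖M * ψ r‖ = M * (r:ℝ) ^ ((1:ℝ) - d) := by
        rw [hψdef]; simp only [if_pos hrR]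
        rw [Real.norm_eq_abs, abs_of_nonneg (mul_nonneg hM0 (Real.rpow_nonneg hr0.le _))]
      rw [h1, h2]
      exact mul_le_mul_of_nonneg_right (hy₀ _) (Real.rpow_nonneg hr0.le _)
    · have hz : g (x + (r:ℝ) • (ω : EuclideanSpace ℝ (Fin d))) = 0 := by
        apply image_eq_zero_of_notMem_tsupport
        intro hmem
        have h1 : ‖x + (r:ℝ) • (ω : EuclideanSpace ℝ (Fin d))‖ ≤ R₀ := by
          simpa [Metric.mem_closedBall, dist_eq_norm] using hR₀ hmem
        have h2 : (r:ℝ) ≤ ‖x + (r:ℝ) • (ω : EuclideanSpace ℝ (Fin d))‖ + ‖x‖ := by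
          have h3 : ‖(x + (r:ℝ) • (ω : EuclideanSpace ℝ (Fin d))) - x‖ ≤
              ‖x + (r:ℝ) • (ω : EuclideanSpace ℝ (Fin d))‖ + ‖x‖ := norm_sub_le _ _
          simpa [norm_smul, hω1, abs_of_pos hr0] using h3
        rw [hRdef] at hrR
        push_neg at hrR
        linarith
      have hz2 : H (ω, r) = 0 := by rw [hH]; simp [hz]
      rw [hz2, norm_zero]
      exact norm_nonneg _
  have hHint : Integrable H (σ.prod ν) :=
    Integrable.mono ((integrable_const M).mul_prod hψint)
      hHc.aestronglyMeasurable (Filter.Eventually.of_forall hbound)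
  -- transfer to the Euclidean space via polar coordinates
  set T := homeomorphUnitSphereProd (EuclideanSpace ℝ (Fin d)) with hT
  have MP := μ.measurePreserving_homeomorphUnitSphereProd
  rw [show Module.finrank ℝ (EuclideanSpace ℝ (Fin d)) = d from finrank_euclideanSpace_fin] at MP
  have hcomp : ∀ z : ({(0 : EuclideanSpace ℝ (Fin d))}ᶜ : Set (EuclideanSpace ℝ (Fin d))),
      H (T z) = h (z : EuclideanSpace ℝ (Fin d)) := by
    intro z
    simp only [hH, hT, homeomorphUnitSphereProd_apply_fst_coe,
      homeomorphUnitSphereProd_apply_snd_coe, hh]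
    rw [smul_inv_smul₀ (norm_ne_zero_iff.2 z.2)]
  have hhint : Integrable h μ := by
    have h1 : Integrable (H ∘ T) (μ.comap (↑)) :=
      (MP.integrable_comp_emb T.measurableEmbedding).2 hHint
    have h1' : Integrable
        (fun z : ({(0 : EuclideanSpace ℝ (Fin d))}ᶜ : Set (EuclideanSpace ℝ (Fin d))) =>
          h (z : EuclideanSpace ℝ (Fin d))) (μ.comap (↑)) :=
      h1.congr (Filter.Eventually.of_forall fun z => hcomp z)
    have h2 : Integrable h (μ.restrict {(0 : EuclideanSpace ℝ (Fin d))}ᶜ) := by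
      rw [← map_comap_subtype_coe (measurableSet_singleton (0 : EuclideanSpace ℝ (Fin d))).compl]
      exact ((MeasurableEmbedding.subtype_coe
        (measurableSet_singleton (0 : EuclideanSpace ℝ (Fin d))).compl).integrable_map_iff).2 h1'
    rwa [restrict_compl_singleton] at h2
  have heq : ∫ z, h z ∂μ = ∫ p, H p ∂(σ.prod ν) := by
    calc ∫ z, h z ∂μ
        = ∫ z in ({(0 : EuclideanSpace ℝ (Fin d))}ᶜ : Set (EuclideanSpace ℝ (Fin d))), h z ∂μ := by
          rw [restrict_compl_singleton]
      _ = ∫ z : ({(0 : EuclideanSpace ℝ (Fin d))}ᶜ : Set (EuclideanSpace ℝ (Fin d))),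
            h (z : EuclideanSpace ℝ (Fin d)) ∂(μ.comap (↑)) :=
          (integral_subtype_comap (measurableSet_singleton
            (0 : EuclideanSpace ℝ (Fin d))).compl h).symm
      _ = ∫ z : ({(0 : EuclideanSpace ℝ (Fin d))}ᶜ : Set (EuclideanSpace ℝ (Fin d))),
            H (T z) ∂(μ.comap (↑)) :=
          integral_congr_ae (Filter.Eventually.of_forall fun z => (hcomp z).symm)
      _ = ∫ p, H p ∂(σ.prod ν) := MP.integral_comp T.measurableEmbedding H
  have hfub : ∫ p, H p ∂(σ.prod ν) = ∫ ω, (∫ r, H (ω, r) ∂ν) ∂σ :=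
    integral_prod H hHint
  -- inner integral
  have hinner : ∀ ω : sphere (0 : EuclideanSpace ℝ (Fin d)) 1,
      ∫ r, H (ω, r) ∂ν = ∫ r in Ioi (0:ℝ),
        g (x + r • (ω : EuclideanSpace ℝ (Fin d))) := by
    intro ω
    rw [hν, Measure.volumeIoiPow]
    simp only [ENNReal.ofReal]
    rw [integral_withDensity_eq_integral_smul
      (by exact (measurable_subtype_coe.pow_const _).real_toNNReal) _]
    have h3 : ∫ r in Ioi (0:ℝ), Real.toNNReal (r ^ (d-1)) •
        (g (x + r • (ω : EuclideanSpace ℝ (Fin d))) * r ^ ((1:ℝ) - d)) =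
        ∫ r in Ioi (0:ℝ), g (x + r • (ω : EuclideanSpace ℝ (Fin d))) := by
      apply setIntegral_congr_fun measurableSet_Ioi
      intro r hr
      beta_reduce
      have hr0 : (0:ℝ) < r := hr
      rw [NNReal.smul_def, Real.coe_toNNReal _ (pow_nonneg hr0.le _)]
      have h1 : r ^ (d - 1) * r ^ ((1:ℝ) - d) = 1 := by
        rw [← Real.rpow_natCast r (d - 1), ← Real.rpow_add hr0]
        have he : ((d - 1 : ℕ) : ℝ) + ((1:ℝ) - d) = 0 := by
          rw [Nat.cast_sub (by omega : 1 ≤ d)]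
          push_cast; ring
        rw [he, Real.rpow_zero]
      calc r ^ (d - 1) * (g (x + r • (ω : EuclideanSpace ℝ (Fin d))) * r ^ ((1:ℝ) - d))
          = r ^ (d - 1) * r ^ ((1:ℝ) - d) *
              g (x + r • (ω : EuclideanSpace ℝ (Fin d))) := by ring
        _ = g (x + r • (ω : EuclideanSpace ℝ (Fin d))) := by rw [h1, one_mul]
    exact (integral_subtype_comap measurableSet_Ioi
      (fun r : ℝ => Real.toNNReal (r ^ (d-1)) •
        (g (x + r • (ω : EuclideanSpace ℝ (Fin d))) * r ^ ((1:ℝ) - d)))).trans h3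
  -- lower bound over the sphere
  have hlow : (σ univ).toReal * c ≤ ∫ z, h z ∂μ := by
    rw [heq, hfub]
    have hconst : Integrable (fun _ : sphere (0 : EuclideanSpace ℝ (Fin d)) 1 => c) σ :=
      integrable_const c
    have hIP : Integrable (fun ω : sphere (0 : EuclideanSpace ℝ (Fin d)) 1 =>
        ∫ r, H (ω, r) ∂ν) σ := hHint.integral_prod_left
    have hpt : ∀ ω : sphere (0 : EuclideanSpace ℝ (Fin d)) 1, c ≤ ∫ r, H (ω, r) ∂ν := by
      intro ω
      rw [hinner ω]
      exact hc (ω : EuclideanSpace ℝ (Fin d)) (mem_sphere_zero_iff_norm.1 ω.2)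
    calc (σ univ).toReal * c = ∫ _ω, c ∂σ := by rw [integral_const]; simp [smul_eq_mul, Measure.real]
      _ ≤ ∫ ω, (∫ r, H (ω, r) ∂ν) ∂σ := integral_mono hconst hIP hpt
  -- translation invariance
  have htrans : ∀ z : EuclideanSpace ℝ (Fin d),
      g (x + z) * ‖x - (x + z)‖ ^ ((1:ℝ) - d) = h z := by
    intro z
    rw [hh]
    congr 2
    rw [show x - (x + z) = -z by abel, norm_neg]
  have hΦint : Integrable (fun y => g y * ‖x - y‖ ^ ((1:ℝ) - d)) μ := by
    have h2 : Integrable (fun z : EuclideanSpace ℝ (Fin d) =>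
        (fun y => g y * ‖x - y‖ ^ ((1:ℝ) - d)) (x + z)) μ :=
      hhint.congr (Filter.Eventually.of_forall fun z => (htrans z).symm)
    have h3 := h2.comp_add_left (-x)
    simpa using h3
  refine ⟨hΦint, ?_⟩
  have hint_eq : ∫ y, g y * ‖x - y‖ ^ ((1:ℝ) - d) ∂μ = ∫ z, h z ∂μ := by
    rw [← integral_add_left_eq_self (μ := μ) (fun y => g y * ‖x - y‖ ^ ((1:ℝ) - d)) x]
    exact integral_congr_ae (Filter.Eventually.of_forall fun z => htrans z)
  rw [hμ] at hint_eq hlow ⊢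
  rw [hint_eq]
  exact hlow

end DorronsoroAux

/-- Dorronsoro's theorem, `L^1` version. -/
theorem dorronsoro_L1 (d : ℕ) (hd : 2 ≤ d) :
    ∃ C : ℝ, 0 < C ∧ ∀ f : EuclideanSpace ℝ (Fin d) → ℝ,
      ContDiff ℝ (⊤ : ℕ∞) f → HasCompactSupport f →
      ∃ F : EuclideanSpace ℝ (Fin d) → ℝ, Integrable F volume ∧
        (∀ x, f x ≤ rieszPotential d 1 F x) ∧
        (∫ x, |F x|) ≤ C * ∫ x, ‖fderiv ℝ f x‖ := by
  classical
  haveI : Nontrivial (EuclideanSpace ℝ (Fin d)) := by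
    refine Module.nontrivial_of_finrank_pos (R := ℝ) (M := EuclideanSpace ℝ (Fin d)) ?_
    rw [finrank_euclideanSpace_fin]; omega
  set σ : ℝ := ((volume : Measure (EuclideanSpace ℝ (Fin d))).toSphere univ).toReal with hσ
  have hσpos : 0 < σ := by
    rw [hσ]
    apply ENNReal.toReal_pos
    · rw [Measure.toSphere_apply_univ]
      refine mul_ne_zero ?_ ?_
      · rw [finrank_euclideanSpace_fin]
        exact_mod_cast (by omega : d ≠ 0)
      · exact (measure_ball_pos _ _ one_pos).ne'
    · exact measure_ne_top _ _
  have hrc : 0 < rieszConst d 1 := by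
    rw [rieszConst]
    apply div_pos
    · apply Real.Gamma_pos_of_pos
      have h2d : (2:ℝ) ≤ (d:ℝ) := by exact_mod_cast hd
      linarith
    · refine mul_pos (mul_pos ?_ ?_) ?_
      · exact Real.rpow_pos_of_pos two_pos 1
      · exact Real.rpow_pos_of_pos Real.pi_pos _
      · exact Real.Gamma_pos_of_pos (by norm_num)
  set K : ℝ := (σ * rieszConst d 1)⁻¹ with hK
  have hKpos : 0 < K := inv_pos.2 (mul_pos hσpos hrc)
  refine ⟨K, hKpos, fun f hf hsupp => ?_⟩
  set g : EuclideanSpace ℝ (Fin d) → ℝ := fun y => ‖fderiv ℝ f y‖ with hg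
  have hgc : Continuous g := (hf.continuous_fderiv (by simp)).norm
  have hgs : HasCompactSupport g := (hsupp.fderiv ℝ).norm
  have hg0 : ∀ y, 0 ≤ g y := fun y => norm_nonneg _
  refine ⟨fun y => K * g y, ?_, ?_, ?_⟩
  · exact (hgc.integrable_of_hasCompactSupport hgs).const_mul K
  · intro x
    obtain ⟨hint, hle⟩ := DorronsoroAux.polar_lower hd g hgc hgs hg0 x (f x)
      (fun ω hω => DorronsoroAux.ray_bound f hf hsupp x ω hω)
    have e1 : rieszPotential d 1 (fun y => K * g y) x
        = rieszConst d 1 * (K * ∫ y, g y * ‖x - y‖ ^ ((1:ℝ) - d)) := by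
      rw [rieszPotential]
      congr 1
      rw [← integral_const_mul]
      apply integral_congr_ae
      filter_upwards with y
      ring
    have hrcK : rieszConst d 1 * K = σ⁻¹ := by
      rw [hK, mul_inv]
      field_simp [hrc.ne', hσpos.ne']
    calc f x = σ⁻¹ * (σ * f x) := by field_simp
      _ ≤ σ⁻¹ * ∫ y, g y * ‖x - y‖ ^ ((1:ℝ) - d) :=
          mul_le_mul_of_nonneg_left hle (inv_nonneg.2 hσpos.le)
      _ = rieszConst d 1 * (K * ∫ y, g y * ‖x - y‖ ^ ((1:ℝ) - d)) := by
          rw [← hrcK]; ring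
      _ = rieszPotential d 1 (fun y => K * g y) x := e1.symm
  · have e2 : ∫ x, |K * g x| = K * ∫ x, g x := by
      rw [← integral_const_mul]
      apply integral_congr_ae
      filter_upwards with y
      rw [abs_mul, abs_of_pos hKpos, abs_of_nonneg (hg0 y)]
    rw [e2]
end
end

section
/- Minimax for bilinear pairings: let X be a convex compact subset of a topological vector space and Y a convex subset of a topological vector space, and let L : X × Y → ℝ be continuous, convex in the first variable and concave in the second. Then min_{x∈X} sup_{y∈Y} L(x,y) = sup_{y∈Y} min_{x∈X} L(x,y) (values in ℝ ∪ {+∞}). -/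
/-! Let `c` be a real number above `sup_y min_x L x y`, so that every `y ∈ Y` has some `x ∈ X`
with `L x y < c`. If no `x ∈ X` satisfied `L x y ≤ c` for all `y ∈ Y`, the relatively open sets
`{x | c < L x y}` would cover `X`, and by compactness finitely many `y₁, …, yₙ` would do.
Convexity in `x` makes `{z ∈ ℝⁿ | ∃ x ∈ X, ∀ i, L x yᵢ ≤ zᵢ}` convex; separating it from the open
orthant `{z | ∀ i, zᵢ < c}` yields a probability vector `w` with `c ≤ ∑ wᵢ L x yᵢ` on `X`.
By concavity in `y`, the point `∑ wᵢ yᵢ ∈ Y` then has `c ≤ L x (∑ wᵢ yᵢ)` for every `x ∈ X`,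
a contradiction. -/

open MeasureTheory Real Metric Set
open scoped FourierTransform ENNReal
noncomputable section

theorem LinearMap.nonneg_of_le_map_add_smul {M : Type*} [AddCommGroup M] [Module ℝ M]
    (f : M →ₗ[ℝ] ℝ) {z v : M} {u : ℝ} (h : ∀ t : ℝ, 0 ≤ t → u ≤ f (z + t • v)) : 0 ≤ f v := by
  by_contra! hv
  have hz : u ≤ f z := by simpa using h 0 le_rfl
  have ht := h ((f z - u + 1) / -f v) (div_nonneg (by linarith) (by linarith))
  rw [map_add, map_smul, smul_eq_mul, div_mul_eq_mul_div, div_neg, mul_div_cancel_right₀ _ hv.ne]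
    at ht
  linarith

theorem LinearMap.apply_eq_sum_mul_single {ι : Type*} [Fintype ι] [DecidableEq ι]
    (f : (ι → ℝ) →ₗ[ℝ] ℝ) (z : ι → ℝ) : f z = ∑ i, z i * f (Pi.single i 1) := by
  nth_rw 1 [pi_eq_sum_univ' z]
  simp only [map_sum, map_smul, smul_eq_mul]

theorem IsUpperSet.exists_mem_stdSimplex_forall_le_sum_mul {ι : Type*} [Fintype ι]
    {K : Set (ι → ℝ)} (hK : Convex ℝ K) (hKu : IsUpperSet K) (hKne : K.Nonempty) {c : ℝ}
    (hKc : ∀ z ∈ K, ∃ i, c ≤ z i) : ∃ w ∈ stdSimplex ℝ ι, ∀ z ∈ K, c ≤ ∑ i, w i * z i := by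
  classical
  obtain ⟨z₀, hz₀⟩ := hKne
  have hdisj : Disjoint (univ.pi fun _ => Iio c) K := disjoint_left.2 fun z hzC hzK => by
    obtain ⟨i, hi⟩ := hKc z hzK
    exact (hzC i trivial).not_ge hi
  obtain ⟨f, u, hfC, hfK⟩ := geometric_hahn_banach_open (convex_pi fun _ _ => convex_Iio c)
    (isOpen_set_pi finite_univ fun _ _ => isOpen_Iio) hK hdisj
  set a : ι → ℝ := fun i => f (Pi.single i 1)
  have hf : ∀ z, f z = ∑ i, z i * a i := f.toLinearMap.apply_eq_sum_mul_single
  have ha : ∀ i, 0 ≤ a i := fun i => f.toLinearMap.nonneg_of_le_map_add_smul fun t ht =>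
    hfK _ (hKu (le_add_of_nonneg_right (smul_nonneg ht (Pi.single_nonneg.2 zero_le_one))) hz₀)
  have hbelow : ∀ c' < c, c' * ∑ i, a i < u := fun c' hc' => by
    simpa [hf, Finset.mul_sum, mul_comm] using hfC (fun _ => c') fun _ _ => hc'
  have hS : 0 < ∑ i, a i := by
    refine (Finset.sum_nonneg fun i _ => ha i).lt_of_ne' fun hS₀ => ?_
    have ha0 : ∀ i, a i = 0 := fun i =>
      (Finset.sum_eq_zero_iff_of_nonneg fun i _ => ha i).1 hS₀ i (Finset.mem_univ i)
    have hu : u ≤ 0 := by simpa [hf, ha0] using hfK z₀ hz₀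
    have h := hbelow (c - 1) (by linarith)
    rw [hS₀, mul_zero] at h
    linarith
  refine ⟨fun i => a i / ∑ j, a j, ⟨fun i => div_nonneg (ha i) hS.le, ?_⟩, fun z hz => ?_⟩
  · rw [← Finset.sum_div, div_self hS.ne']
  refine le_of_forall_lt_imp_le_of_dense fun c' hc' => ?_
  have hz : c' * ∑ i, a i < ∑ i, z i * a i := (hbelow c' hc').trans_le (hf z ▸ hfK z hz)
  have hsum : ∑ i, a i / (∑ j, a j) * z i = (∑ i, z i * a i) / ∑ j, a j := by
    rw [Finset.sum_div]
    exact Finset.sum_congr rfl fun i _ => by ring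
  change c' ≤ ∑ i, a i / (∑ j, a j) * z i
  rw [hsum, le_div_iff₀ hS]
  linarith

theorem ConvexOn.exists_mem_stdSimplex_forall_le_sum_mul {ι E : Type*} [Fintype ι]
    [AddCommGroup E] [Module ℝ E] {X : Set E} (hX : Convex ℝ X) (hXne : X.Nonempty)
    {g : ι → E → ℝ} (hg : ∀ i, ConvexOn ℝ X (g i)) {c : ℝ} (H : ∀ x ∈ X, ∃ i, c < g i x) :
    ∃ w ∈ stdSimplex ℝ ι, ∀ x ∈ X, c ≤ ∑ i, w i * g i x := by
  set K : Set (ι → ℝ) := {z | ∃ x ∈ X, ∀ i, g i x ≤ z i}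
  have hK : Convex ℝ K := by
    rintro z ⟨x, hx, hzx⟩ z' ⟨x', hx', hzx'⟩ a b ha hb hab
    refine ⟨a • x + b • x', hX hx hx' ha hb hab, fun i => ((hg i).2 hx hx' ha hb hab).trans ?_⟩
    simp only [Pi.add_apply, Pi.smul_apply, smul_eq_mul]
    gcongr
    exacts [hzx i, hzx' i]
  have hKu : IsUpperSet K := fun z z' hzz' ⟨x, hx, hzx⟩ => ⟨x, hx, fun i => (hzx i).trans (hzz' i)⟩
  have hKc : ∀ z ∈ K, ∃ i, c ≤ z i := fun z ⟨x, hx, hzx⟩ => by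
    obtain ⟨i, hi⟩ := H x hx
    exact ⟨i, hi.le.trans (hzx i)⟩
  obtain ⟨x₀, hx₀⟩ := hXne
  obtain ⟨w, hw, hwK⟩ :=
    hKu.exists_mem_stdSimplex_forall_le_sum_mul hK ⟨_, x₀, hx₀, fun _ => le_rfl⟩ hKc
  exact ⟨w, hw, fun x hx => hwK _ ⟨x, hx, fun _ => le_rfl⟩⟩

section Minimax

variable {E F : Type*} [AddCommGroup E] [Module ℝ E] [AddCommGroup F] [Module ℝ F]
  {X : Set E} {Y : Set F} {L : E → F → ℝ}

theorem exists_forall_le_of_forall_exists_lt_of_fintype {ι : Type*} [Fintype ι]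
    (hX : Convex ℝ X) (hXne : X.Nonempty) (hY : Convex ℝ Y)
    (hconv : ∀ y ∈ Y, ConvexOn ℝ X (fun x => L x y))
    (hconc : ∀ x ∈ X, ConcaveOn ℝ Y (fun y => L x y)) {y : ι → F} (hy : ∀ i, y i ∈ Y) {c : ℝ}
    (H : ∀ x ∈ X, ∃ i, c < L x (y i)) : ∃ y ∈ Y, ∀ x ∈ X, c ≤ L x y := by
  obtain ⟨w, ⟨hw₀, hw₁⟩, hw⟩ :=
    ConvexOn.exists_mem_stdSimplex_forall_le_sum_mul hX hXne (fun i => hconv (y i) (hy i)) H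
  refine ⟨∑ i, w i • y i, hY.sum_mem (fun i _ => hw₀ i) hw₁ fun i _ => hy i,
    fun x hx => (hw x hx).trans ?_⟩
  simpa using (hconc x hx).le_map_sum (fun i _ => hw₀ i) hw₁ fun i _ => hy i

theorem IsCompact.exists_forall_le_of_forall_exists_lt [TopologicalSpace E] (hXc : IsCompact X)
    (hX : Convex ℝ X) (hXne : X.Nonempty) (hY : Convex ℝ Y)
    (hlsc : ∀ y ∈ Y, LowerSemicontinuousOn (fun x => L x y) X)
    (hconv : ∀ y ∈ Y, ConvexOn ℝ X (fun x => L x y))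
    (hconc : ∀ x ∈ X, ConcaveOn ℝ Y (fun y => L x y)) {c : ℝ}
    (hc : ∀ y ∈ Y, ∃ x ∈ X, L x y < c) : ∃ x ∈ X, ∀ y ∈ Y, L x y ≤ c := by
  by_contra! H
  choose U hUo hU using fun y : Y => lowerSemicontinuousOn_iff_preimage_Ioi.1 (hlsc y y.2) c
  have hUX : ∀ x ∈ X, ∀ y : Y, x ∈ U y ↔ c < L x y := fun x hx y => by
    simpa [hx] using (congrArg (x ∈ ·) (hU y)).symm
  obtain ⟨t, ht⟩ := hXc.elim_finite_subcover U hUo fun x hx => by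
    obtain ⟨y, hy, hxy⟩ := H x hx
    exact mem_iUnion.2 ⟨⟨y, hy⟩, (hUX x hx _).2 hxy⟩
  obtain ⟨y, hy, hyc⟩ := exists_forall_le_of_forall_exists_lt_of_fintype (ι := t) hX hXne hY
    hconv hconc (fun i => i.1.2) fun x hx => by
      obtain ⟨i, hit, hxi⟩ := mem_iUnion₂.1 (ht hx)
      exact ⟨⟨i, hit⟩, (hUX x hx i).1 hxi⟩
  obtain ⟨x, hx, hxc⟩ := hc y hy
  exact (hyc x hx).not_gt hxc

end Minimax

theorem kyfan_minimax_general {E F : Type*} [AddCommGroup E] [Module ℝ E] [TopologicalSpace E]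
    [AddCommGroup F] [Module ℝ F] [TopologicalSpace F]
    (X : Set E) (Y : Set F) (hXc : IsCompact X) (hX : Convex ℝ X) (hXne : X.Nonempty)
    (hY : Convex ℝ Y) (L : E → F → ℝ)
    (hcont : ContinuousOn (fun p : E × F => L p.1 p.2) (X ×ˢ Y))
    (hconv : ∀ y ∈ Y, ConvexOn ℝ X (fun x => L x y))
    (hconc : ∀ x ∈ X, ConcaveOn ℝ Y (fun y => L x y)) :
    (⨅ x : X, ⨆ y : Y, (L x y : EReal)) = ⨆ y : Y, ⨅ x : X, (L x y : EReal) := by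
  refine le_antisymm (EReal.le_of_forall_lt_iff_le.1 fun c hc => ?_)
    (iSup_iInf_le_iInf_iSup _)
  have hlsc : ∀ y ∈ Y, LowerSemicontinuousOn (fun x => L x y) X := fun y hy =>
    (hcont.comp (continuousOn_id.prodMk continuousOn_const) fun x hx => ⟨hx, hy⟩)
      |>.lowerSemicontinuousOn
  have hc' : ∀ y ∈ Y, ∃ x ∈ X, L x y < c := fun y hy => by
    obtain ⟨x, hx⟩ :=
      iInf_lt_iff.1 ((le_iSup (fun y : Y => ⨅ x : X, (L x y : EReal)) ⟨y, hy⟩).trans_lt hc)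
    exact ⟨x, x.2, EReal.coe_lt_coe_iff.1 hx⟩
  obtain ⟨x, hx, hxc⟩ := hXc.exists_forall_le_of_forall_exists_lt hX hXne hY hlsc hconv hconc hc'
  exact iInf_le_of_le ⟨x, hx⟩ (iSup_le fun y => EReal.coe_le_coe_iff.2 (hxc y y.2))

/-- Ky Fan type minimax for a convex-concave continuous function,
with values in `EReal` (the common value may be `+∞`). -/
theorem kyfan_minimax {E F : Type*} [AddCommGroup E] [Module ℝ E] [TopologicalSpace E]
    [AddCommGroup F] [Module ℝ F] [TopologicalSpace F]
    (X : Set E) (Y : Set F) (hXc : IsCompact X) (hX : Convex ℝ X) (hXne : X.Nonempty)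
    (hY : Convex ℝ Y) (hYne : Y.Nonempty) (L : E → F → ℝ)
    (hcont : ContinuousOn (fun p : E × F => L p.1 p.2) (X ×ˢ Y))
    (hconv : ∀ y ∈ Y, ConvexOn ℝ X (fun x => L x y))
    (hconc : ∀ x ∈ X, ConcaveOn ℝ Y (fun y => L x y)) :
    (⨅ x : X, ⨆ y : Y, (L x y : EReal)) = ⨆ y : Y, ⨅ x : X, (L x y : EReal) :=
  kyfan_minimax_general X Y hXc hX hXne hY L hcont hconv hconc
end
end
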